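/- Let G and H be finite abelian groups (written additively) and let f : G → H be any function. Then f is differentially 1-uniform if and only if the number of quadruples (w,x,y,z) ∈ G⁴ satisfying both w + x = y + z and f(w) + f(x) = f(y) + f(z) is exactly |G|(2|G| − 1). -/

import Mathlib

/-- A function `f : G → H` between additive groups is differentially 1-uniform if for
every `(a, b) ≠ (0, 0)` the equation `f (x + a) - f x = b` has at most one solution. -/
def DiffOneUniform {G H : Type*} [AddGroup G] [AddGroup H] (f : G → H) : Prop :=
  ∀ a : G, ∀ b : H, ¬(a = 0 ∧ b = 0) →
    ∀ x y : G, f (x + a) - f x = b → f (y + a) - f y = b → x = y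

/-!
Substituting `w = y + d`, `z = x + d` identifies the quadruples with the triples `(d, x, y)`
such that `Δ_d f x = Δ_d f y`. For `d = 0` every pair `(x, y)` qualifies, giving `|G|²`
triples; for each `d ≠ 0` the pairs `(x, y)` with `Δ_d f x = Δ_d f y` include the diagonal,
so there are at least `|G|` of them, with equality iff `Δ_d f` is injective. Hence the count
is at least `|G|² + (|G| - 1)|G| = |G|(2|G| - 1)`, with equality iff every `Δ_d f` with
`d ≠ 0` is injective, which is differential 1-uniformity.
-/

open Finset fwdDiff

section Collisions

variable {α β : Type*} [Fintype α] [DecidableEq β]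

lemma univ_diag_subset_filter_comp_eq (g : α → β) :
    (univ : Finset α).diag ⊆ univ.filter fun p : α × α => g p.1 = g p.2 := by
  intro p hp
  simp_all [mem_diag]

lemma card_le_card_filter_comp_eq (g : α → β) :
    Fintype.card α ≤ #{p : α × α | g p.1 = g p.2} := by
  simpa using card_le_card (univ_diag_subset_filter_comp_eq g)

lemma card_filter_comp_eq_eq_card_iff (g : α → β) :
    #{p : α × α | g p.1 = g p.2} = Fintype.card α ↔ Function.Injective g := by
  constructor
  · intro hcard a b hab
    have hdiag : (univ : Finset α).diag = univ.filter fun p : α × α => g p.1 = g p.2 :=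
      eq_of_subset_of_card_le (univ_diag_subset_filter_comp_eq g) (by simp [hcard])
    have hmem : (a, b) ∈ (univ : Finset α).diag := by simp [hdiag, hab]
    exact (mem_diag.mp hmem).2
  · intro hg
    refine le_antisymm ?_ (card_le_card_filter_comp_eq g)
    calc #{p : α × α | g p.1 = g p.2}
        ≤ #(univ : Finset α).diag := card_le_card fun p hp => by
          simpa [mem_diag] using hg (mem_filter.mp hp).2
      _ = Fintype.card α := by simp

end Collisions

section DifferentialUniformity

variable {G H : Type*} [AddCommGroup G] [AddCommGroup H]

lemma diffOneUniform_iff_injective_fwdDiff (f : G → H) :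
    DiffOneUniform f ↔ ∀ d ≠ 0, Function.Injective (Δ_[d] f) := by
  constructor
  · intro h d hd x y hxy
    exact h d (Δ_[d] f x) (fun h0 => hd h0.1) x y rfl hxy.symm
  · intro h a b hab x y hx hy
    by_cases ha : a = 0
    · subst ha
      exact absurd ⟨rfl, by simp [← hx]⟩ hab
    · exact h a ha (hx.trans hy.symm)

variable [Fintype G] [DecidableEq H]

lemma card_filter_fwdDiff_zero (f : G → H) :
    #{p : G × G | Δ_[0] f p.1 = Δ_[0] f p.2} = Fintype.card G * Fintype.card G := by
  simp [fwdDiff]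

variable [DecidableEq G]

lemma card_quadruples_eq_card_filter_fwdDiff_eq (f : G → H) :
    #{q : G × G × G × G | q.1 + q.2.1 = q.2.2.1 + q.2.2.2 ∧
        f q.1 + f q.2.1 = f q.2.2.1 + f q.2.2.2} =
      #{t : G × G × G | Δ_[t.1] f t.2.1 = Δ_[t.1] f t.2.2} := by
  refine card_nbij' (fun q => (q.1 - q.2.2.1, q.2.1, q.2.2.1))
    (fun t => (t.2.2 + t.1, t.2.1, t.2.2, t.2.1 + t.1)) ?_ ?_ ?_ ?_
  all_goals simp only [Set.MapsTo, Set.LeftInvOn, mem_coe, mem_filter, mem_univ, true_and]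
  · rintro ⟨w, x, y, z⟩ ⟨hsum, hf⟩
    have hz : x + (w - y) = z := by grind
    simp only [fwdDiff, hz, add_sub_cancel]
    grind
  · rintro ⟨d, x, y⟩ h
    simp only [fwdDiff] at h
    constructor
    · abel
    · grind
  · rintro ⟨w, x, y, z⟩ ⟨hsum, -⟩
    simp only [Prod.mk.injEq]
    grind
  · simp

lemma card_quadruples_eq_sum_card_filter_fwdDiff_eq (f : G → H) :
    #{q : G × G × G × G | q.1 + q.2.1 = q.2.2.1 + q.2.2.2 ∧
        f q.1 + f q.2.1 = f q.2.2.1 + f q.2.2.2} =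
      ∑ d : G, #{p : G × G | Δ_[d] f p.1 = Δ_[d] f p.2} := by
  rw [card_quadruples_eq_card_filter_fwdDiff_eq, card_filter, Fintype.sum_prod_type]
  simp only [card_filter]

end DifferentialUniformity

theorem diffOneUniform_iff_card_quadruples {G H : Type*}
    [AddCommGroup G] [Fintype G] [DecidableEq G]
    [AddCommGroup H] [DecidableEq H] (f : G → H) :
    DiffOneUniform f ↔
      (Finset.univ.filter (fun q : G × G × G × G =>
          q.1 + q.2.1 = q.2.2.1 + q.2.2.2 ∧
          f q.1 + f q.2.1 = f q.2.2.1 + f q.2.2.2)).card =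
        Fintype.card G * (2 * Fintype.card G - 1) := by
  have hcount : Fintype.card G * (2 * Fintype.card G - 1) =
      Fintype.card G * Fintype.card G + ∑ _d ∈ univ.erase (0 : G), Fintype.card G := by
    rw [sum_const, card_erase_of_mem (mem_univ 0), card_univ, smul_eq_mul]
    rcases Fintype.card G with _ | m
    · rfl
    · rw [show 2 * (m + 1) - 1 = 2 * m + 1 by omega, Nat.add_sub_cancel]
      ring
  rw [diffOneUniform_iff_injective_fwdDiff, card_quadruples_eq_sum_card_filter_fwdDiff_eq,
    ← add_sum_erase _ _ (mem_univ 0), card_filter_fwdDiff_zero, hcount, add_right_inj, eq_comm,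
    sum_eq_sum_iff_of_le fun d _ => card_le_card_filter_comp_eq (Δ_[d] f)]
  simp only [mem_erase, mem_univ, and_true, eq_comm (a := Fintype.card G),
    card_filter_comp_eq_eq_card_iff]
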